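/- arXiv:1908.01657 — 6 statements merged into one kernel-verified Lean document; each statement's English description precedes it below -/
import Mathlib

section
/- For every m ∈ ℕ, the complete bipartite graph K_{2m+1,2m+1} is equitably 2m-colorable. -/
open SimpleGraph

attribute [local instance] Classical.propDecidable

/-- `G` is equitably `k`-colorable: it has a proper `k`-coloring in which the sizes of any
two color classes differ by at most one. -/
def EquitablyColorable {V : Type} [Fintype V] (G : SimpleGraph V) (k : ℕ) : Prop :=
  ∃ f : V → Fin k, (∀ u v, G.Adj u v → f u ≠ f v) ∧
    ∀ i j : Fin k, (Finset.univ.filter fun v => f v = i).card ≤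
      (Finset.univ.filter fun v => f v = j).card + 1

/-!
Color a vertex `x` of the left side of `K_{n,n}` by `x % k` and a vertex `y` of the right side
by `k + y % k`. The two sides get disjoint palettes, so the coloring is proper, and each color
class is a residue class modulo `k` in `{0, …, n - 1}`, which has `⌊n / k⌋` or `⌊n / k⌋ + 1`
elements.
-/

open Finset

lemma Nat.count_eq_card_filter_fin (p : ℕ → Prop) [DecidablePred p] (n : ℕ) :
    n.count p = #{x : Fin n | p x} := by
  rw [Nat.count_eq_card_filter_range]
  refine card_bij (fun x hx => ⟨x, mem_range.1 (mem_filter.1 hx).1⟩) ?_ ?_ ?_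
  · simp_all
  · simp
  · intro x hx
    exact ⟨x, by simpa using mem_filter.1 hx, rfl⟩

lemma card_filter_fin_mod_eq (n : ℕ) {k r : ℕ} (hr : r < k) :
    #{x : Fin n | x.val % k = r} = n / k + if r < n % k then 1 else 0 := by
  have hcount := Nat.count_modEq_card n (r.zero_le.trans_lt hr) r
  rw [Nat.mod_eq_of_lt hr, Nat.count_eq_card_filter_fin] at hcount
  simpa [Nat.ModEq, Nat.mod_eq_of_lt hr] using hcount

section ResidueColoring

variable (n : ℕ) {k : ℕ} (hk : 0 < k)

def residueColoring : Fin n ⊕ Fin n → Fin (2 * k) :=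
  Sum.elim (fun x => ⟨x % k, by have := x.val.mod_lt hk; omega⟩)
    (fun y => ⟨k + y % k, by have := y.val.mod_lt hk; omega⟩)

lemma residueColoring_inl_lt (x : Fin n) : (residueColoring n hk (.inl x)).val < k :=
  x.val.mod_lt hk

lemma le_residueColoring_inr (y : Fin n) : k ≤ (residueColoring n hk (.inr y)).val :=
  Nat.le_add_right k _

lemma residueColoring_adj_ne {u v : Fin n ⊕ Fin n}
    (huv : (completeBipartiteGraph (Fin n) (Fin n)).Adj u v) :
    residueColoring n hk u ≠ residueColoring n hk v := by
  rcases u with x | x <;> rcases v with y | y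
  · simp [completeBipartiteGraph] at huv
  · exact Fin.ne_of_lt <| (residueColoring_inl_lt n hk x).trans_le (le_residueColoring_inr n hk y)
  · exact Fin.ne_of_gt <| (residueColoring_inl_lt n hk y).trans_le (le_residueColoring_inr n hk x)
  · simp [completeBipartiteGraph] at huv

lemma card_residueColoring_fiber (i : Fin (2 * k)) :
    #{v | residueColoring n hk v = i} = n / k + if i % k < n % k then 1 else 0 := by
  rw [card_filter, Fintype.sum_sum_type, ← card_filter, ← card_filter]
  simp only [residueColoring, Sum.elim_inl, Sum.elim_inr, Fin.ext_iff]
  rcases lt_or_ge i.val k with hi | hi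
  · have hright : #{y : Fin n | k + y.val % k = i} = 0 := by
      simp only [card_eq_zero, filter_eq_empty_iff]
      omega
    rw [card_filter_fin_mod_eq n hi, hright, Nat.mod_eq_of_lt hi, add_zero]
  · have hleft : #{x : Fin n | x.val % k = i} = 0 := by
      simp only [card_eq_zero, filter_eq_empty_iff]
      intro x _
      have := x.val.mod_lt hk
      omega
    have hright : #{y : Fin n | k + y.val % k = i} = #{y : Fin n | y.val % k = i - k} := by
      congr 1
      ext y
      simp only [mem_filter, mem_univ, true_and]
      omega
    have hi' : i.val % k = i - k := by
      rw [Nat.mod_eq_sub_mod hi, Nat.mod_eq_of_lt (by omega)]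
    rw [hleft, hright, card_filter_fin_mod_eq n (by omega), hi', zero_add]

end ResidueColoring

theorem completeBipartiteGraph_equitablyColorable_two_mul (n : ℕ) {k : ℕ} (hk : 0 < k) :
    EquitablyColorable (completeBipartiteGraph (Fin n) (Fin n)) (2 * k) := by
  refine ⟨residueColoring n hk, fun u v => residueColoring_adj_ne n hk, fun i j => ?_⟩
  rw [card_residueColoring_fiber, card_residueColoring_fiber]
  split_ifs <;> omega

theorem completeBipartite_equitably_colorable (m : ℕ) (hm : 1 ≤ m) :
    EquitablyColorable
      (completeBipartiteGraph (Fin (2 * m + 1)) (Fin (2 * m + 1))) (2 * m) :=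
  completeBipartiteGraph_equitablyColorable_two_mul (2 * m + 1) hm
end

section
/- The star K_{1,9} is equitably 4-choosable but not equitably 5-choosable. -/
open SimpleGraph

attribute [local instance] Classical.propDecidable

/-- `f` is an equitable `L`-coloring of `G` for the `k`-assignment `L`: a proper coloring
from the lists in which each color is used at most `⌈|V(G)|/k⌉` times. -/
def IsEquitableLColoring {V α : Type} [Fintype V] (G : SimpleGraph V) (k : ℕ)
    (L : V → Finset α) (f : V → α) : Prop :=
  (∀ v, f v ∈ L v) ∧ (∀ u v, G.Adj u v → f u ≠ f v) ∧
    ∀ c : α, (Finset.univ.filter fun v => f v = c).card ≤ (Fintype.card V + k - 1) / k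

/-- `G` is equitably `k`-choosable: equitably `L`-colorable for every `k`-assignment `L`. -/
def EquitablyChoosable {V : Type} [Fintype V] (G : SimpleGraph V) (k : ℕ) : Prop :=
  ∀ (α : Type) (L : V → Finset α), (∀ v, (L v).card = k) →
    ∃ f : V → α, IsEquitableLColoring G k L f


/-!
In the star `K_{1,m}` the center's color `c` can appear nowhere else, so with `q = ⌈(m+1)/k⌉` the
`m` leaves need colors from their lists minus `c`, each color used at most `q` times. With
`k`-element lists this is possible exactly when `m ≤ (k-1)q`: necessity by counting the leaves
when every list is the same set of `k` colors, sufficiency by Hall's theorem applied to `q` copies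
of each color. For `m = 9` this reads `9 ≤ 3·3` when `k = 4`, and fails (`9 > 4·2`) when `k = 5`.
-/

open Finset

lemma card_filter_univ_sum {β γ α : Type*} [Fintype β] [Fintype γ] (f : β ⊕ γ → α) (a : α) :
    #{v | f v = a} = #{b | f (Sum.inl b) = a} + #{c | f (Sum.inr c) = a} := by
  simp only [card_filter, Fintype.sum_sum_type]

lemma exists_mem_forall_card_fiber_le {ι α : Type*} [Fintype ι] [DecidableEq α]
    (T : ι → Finset α) (r q : ℕ) (hT : ∀ i, r ≤ #(T i)) (hι : Fintype.card ι ≤ r * q) :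
    ∃ g : ι → α, (∀ i, g i ∈ T i) ∧ ∀ a, #{i | g i = a} ≤ q := by
  have hall : ∀ s : Finset ι, #s ≤ #(s.biUnion fun i => T i ×ˢ (univ : Finset (Fin q))) := by
    intro s
    rcases s.eq_empty_or_nonempty with rfl | ⟨i, hi⟩
    · simp
    calc #s ≤ r * q := s.card_le_univ.trans hι
      _ ≤ #(T i ×ˢ (univ : Finset (Fin q))) := by
        rw [card_product, card_univ, Fintype.card_fin]
        exact Nat.mul_le_mul_right q (hT i)
      _ ≤ _ := card_le_card (subset_biUnion_of_mem (fun i => T i ×ˢ univ) hi)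
  obtain ⟨g, hg_inj, hg_mem⟩ := (all_card_le_biUnion_card_iff_exists_injective _).mp hall
  refine ⟨fun i => (g i).1, fun i => (mem_product.mp (hg_mem i)).1, fun a => ?_⟩
  calc #{i | (g i).1 = a} ≤ #(univ : Finset (Fin q)) :=
        card_le_card_of_injOn (fun i => (g i).2) (fun _ _ => mem_univ _) fun i hi j hj h =>
          hg_inj (Prod.ext ((mem_filter.mp hi).2.trans (mem_filter.mp hj).2.symm) h)
    _ = q := by simp

lemma card_fin_one_sum_add_sub_one_div (ι : Type) [Fintype ι] (k : ℕ) :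
    (Fintype.card (Fin 1 ⊕ ι) + k - 1) / k = (Fintype.card ι + k) / k := by
  rw [Fintype.card_sum, Fintype.card_fin]
  congr 1
  omega

theorem equitablyChoosable_star {ι : Type} [Fintype ι] {k : ℕ} (hk : 0 < k)
    (h : Fintype.card ι ≤ (k - 1) * ((Fintype.card ι + k) / k)) :
    EquitablyChoosable (completeBipartiteGraph (Fin 1) ι) k := by
  intro α L hL
  obtain ⟨c, hc⟩ : (L (Sum.inl 0)).Nonempty := by rw [← card_pos, hL]; exact hk
  obtain ⟨g, hg_mem, hg_fiber⟩ := exists_mem_forall_card_fiber_le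
    (fun i => (L (Sum.inr i)).erase c) (k - 1) _
    (fun i => hL (Sum.inr i) ▸ pred_card_le_card_erase) h
  refine ⟨Sum.elim (fun _ => c) g, ?_, ?_, fun a => ?_⟩
  · rintro (i | i)
    · rwa [Subsingleton.elim i 0]
    · exact mem_of_mem_erase (hg_mem i)
  · rintro (i | i) (j | j) hadj <;> simp at hadj
    · exact fun h => ne_of_mem_erase (hg_mem j) h.symm
    · exact ne_of_mem_erase (hg_mem i)
  · rw [card_fin_one_sum_add_sub_one_div, card_filter_univ_sum]
    change #{i : Fin 1 | c = a} + #{i | g i = a} ≤ _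
    by_cases hca : c = a
    · have h_center : #{i : Fin 1 | c = a} ≤ 1 := card_le_univ _
      have h_leaves : #{i | g i = a} = 0 :=
        card_eq_zero.mpr (filter_eq_empty_iff.mpr fun i _ => hca ▸ ne_of_mem_erase (hg_mem i))
      have hq : 1 ≤ (Fintype.card ι + k) / k := (Nat.le_div_iff_mul_le hk).mpr (by omega)
      omega
    · have h_center : #{i : Fin 1 | c = a} = 0 := by simp [hca]
      rw [h_center, zero_add]
      exact hg_fiber a

theorem not_equitablyChoosable_star {ι : Type} [Fintype ι] {k : ℕ}
    (h : (k - 1) * ((Fintype.card ι + k) / k) < Fintype.card ι) :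
    ¬ EquitablyChoosable (completeBipartiteGraph (Fin 1) ι) k := by
  intro hchoose
  obtain ⟨f, -, hf_proper, hf_fiber⟩ := hchoose (Fin k) (fun _ => univ) (fun _ => card_fin k)
  have hf_leaf : ∀ i, f (Sum.inr i) ∈ univ.erase (f (Sum.inl 0)) := fun i =>
    mem_erase.mpr ⟨(hf_proper _ _ (by simp)).symm, mem_univ _⟩
  have h_leaves := card_le_mul_card_image_of_maps_to (s := univ) (fun i _ => hf_leaf i)
    ((Fintype.card ι + k) / k) fun b _ => by
      have h_fiber := hf_fiber b
      rw [card_fin_one_sum_add_sub_one_div, card_filter_univ_sum] at h_fiber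
      exact (le_of_add_le_right h_fiber).trans_eq' (by congr)
  rw [card_univ, card_erase_of_mem (mem_univ _), card_univ, Fintype.card_fin, mul_comm] at h_leaves
  omega

theorem star_1_9_equitable_choosability :
    EquitablyChoosable (completeBipartiteGraph (Fin 1) (Fin 9)) 4 ∧
    ¬ EquitablyChoosable (completeBipartiteGraph (Fin 1) (Fin 9)) 5 :=
  ⟨equitablyChoosable_star (by norm_num) (by simp), not_equitablyChoosable_star (by simp)⟩
end

section
/- Let G be a graph with |V(G)| = kq + r where 1 ≤ r ≤ k, and let L be a k-assignment for G. Suppose t satisfies r ≤ t ≤ k, and S = {x_1, …, x_t} is a set of t distinct vertices of G such that |N_G(x_i) − S| ≤ k − i for each 1 ≤ i ≤ t. If G − S has an equitable L-coloring (with respect to the restriction of L), then G has an equitable L-coloring. -/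
open SimpleGraph

attribute [local instance] Classical.propDecidable

/-!
Colour `x₁, …, x_t` greedily in this order with pairwise distinct colours that also avoid the
colours of their neighbours outside `S`: when `xᵢ` is reached, at most `k - i` colours are blocked
by those neighbours and `i - 1` by `x₁, …, x_{i-1}`, so its list of `k` colours has a free one.
Since `t ≥ r`, the graph `G - S` has at most `kq` vertices, so each colour is used at most `q`
times there, and at most once on `S`; and `q + 1 ≤ ⌈(kq + r)/k⌉` because `r ≥ 1`.
-/

open Finset

theorem exists_injective_mem_sdiff_of_card_add_lt {α : Type*} [DecidableEq α] :
    ∀ {n : ℕ} (A F : Fin n → Finset α), (∀ i, #(F i) + i < #(A i)) →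
      ∃ c : Fin n → α, Function.Injective c ∧ ∀ i, c i ∈ A i \ F i
  | 0, _, _, _ => ⟨finZeroElim, fun i => i.elim0, fun i => i.elim0⟩
  | n + 1, A, F, hAF => by
    obtain ⟨a, ha⟩ : (A 0 \ F 0).Nonempty := by
      rw [← card_pos]
      have := hAF 0
      have := le_card_sdiff (F 0) (A 0)
      simp only [Fin.val_zero, add_zero] at *
      omega
    -- Forbidding `a` for the remaining indices trades one unit of `i` for one element of `F`.
    obtain ⟨c, hc_inj, hc⟩ := exists_injective_mem_sdiff_of_card_add_lt
      (fun i => A i.succ) (fun i => insert a (F i.succ)) fun i => by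
        have := hAF i.succ
        have := card_insert_le a (F i.succ)
        simp only [Fin.val_succ] at *
        omega
    refine ⟨Fin.cons a c, Fin.cons_injective_iff.2 ⟨?_, hc_inj⟩, Fin.cases ha fun i => ?_⟩
    · rintro ⟨i, hi⟩
      exact (mem_sdiff.1 (hc i)).2 (hi ▸ mem_insert_self _ _)
    · have := mem_sdiff.1 (hc i)
      simp only [Fin.cons_succ, mem_sdiff, mem_insert, not_or] at this ⊢
      exact ⟨this.1, this.2.2⟩

theorem ceil_div_mul_add_sub_le {k q r t : ℕ} (hrt : r ≤ t) : (k * q + r - t + k - 1) / k ≤ q := by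
  rcases Nat.eq_zero_or_pos k with rfl | hk
  · simp
  · refine Nat.lt_succ_iff.1 <| (Nat.div_lt_iff_lt_mul hk).2 ?_
    rw [Nat.succ_mul, mul_comm q]
    omega

theorem lt_ceil_div_mul_add {k q r : ℕ} (hk : 0 < k) (hr : 0 < r) : q < (k * q + r + k - 1) / k :=
  (Nat.le_div_iff_mul_le hk).2 <| by rw [Nat.succ_mul, mul_comm]; omega

theorem card_setOf_notMem {V : Type*} [Fintype V] (S : Finset V) :
    Fintype.card ↥{v : V | v ∉ S} = Fintype.card V - #S :=
  (Fintype.card_subtype_compl (· ∈ S)).trans (congrArg _ (Fintype.card_coe S))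

theorem exists_extend_of_injective {V α : Type*} {t : ℕ} {x : Fin t → V}
    (hx : Function.Injective x) (c : Fin t → α) (g : ↥{v : V | v ∉ univ.image x} → α) :
    ∃ f : V → α, (∀ i, f (x i) = c i) ∧ ∀ v (h : v ∉ univ.image x), f v = g ⟨v, h⟩ := by
  refine ⟨fun v => if h : v ∈ univ.image x then c (mem_image.1 h).choose else g ⟨v, h⟩,
    fun i => ?_, fun v h => dif_neg h⟩
  have h : x i ∈ univ.image x := mem_image_of_mem x (mem_univ i)
  simp only [dif_pos h]
  exact congrArg c (hx (mem_image.1 h).choose_spec.2)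

section Extension

variable {V α : Type} [Fintype V] {G : SimpleGraph V} {k : ℕ} {L : V → Finset α} {S : Finset V}
  {g : ↥{v : V | v ∉ S} → α} {f : V → α}

theorem card_fiber_le_add_one_of_injOn (hfg : ∀ v (h : v ∉ S), f v = g ⟨v, h⟩)
    (hf : Set.InjOn f S) (a : α) : #{v | f v = a} ≤ #{u | g u = a} + 1 := by
  rw [← card_filter_add_card_filter_not (s := {v | f v = a}) (· ∈ S), add_comm]
  gcongr
  · refine le_of_eq (congrArg card ?_ |>.trans (card_map (Function.Embedding.subtype _)))
    ext v
    simp only [mem_filter, mem_univ, true_and, mem_map, Function.Embedding.coe_subtype]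
    constructor
    · rintro ⟨rfl, hv⟩
      exact ⟨⟨v, hv⟩, (hfg v hv).symm, rfl⟩
    · rintro ⟨u, rfl, rfl⟩
      exact ⟨hfg u u.2, u.2⟩
  · exact card_le_one.2 fun v hv w hw => by
      simp only [mem_filter, mem_univ, true_and] at hv hw
      exact hf hv.2 hw.2 (hv.1.trans hw.1.symm)

theorem IsEquitableLColoring.extend_of_injOn
    (hg : IsEquitableLColoring (G.induce {v | v ∉ S}) k (fun v => L v.1) g)
    (hcard : (Fintype.card ↥{v : V | v ∉ S} + k - 1) / k + 1 ≤ (Fintype.card V + k - 1) / k)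
    (hfg : ∀ v (h : v ∉ S), f v = g ⟨v, h⟩) (hfL : ∀ v ∈ S, f v ∈ L v) (hf : Set.InjOn f S)
    (hfadj : ∀ v ∈ S, ∀ u ∉ S, G.Adj v u → f v ≠ f u) : IsEquitableLColoring G k L f := by
  obtain ⟨hgL, hgadj, hgcard⟩ := hg
  refine ⟨fun v => ?_, fun u v huv => ?_, fun a => ?_⟩
  · by_cases hv : v ∈ S
    · exact hfL v hv
    · rw [hfg v hv]
      exact hgL ⟨v, hv⟩
  · by_cases hu : u ∈ S <;> by_cases hv : v ∈ S
    · exact hf.ne hu hv huv.ne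
    · exact hfadj u hu v hv huv
    · exact (hfadj v hv u hu huv.symm).symm
    · rw [hfg u hu, hfg v hv]
      exact hgadj ⟨u, hu⟩ ⟨v, hv⟩ huv
  · have := hgcard a
    have := card_fiber_le_add_one_of_injOn hfg hf a
    omega

theorem exists_injective_coloring_of_neighbor_bound {t : ℕ} (htk : t ≤ k) (hL : ∀ v, #(L v) = k)
    {x : Fin t → V} (hnbr : ∀ i : Fin t, #(G.neighborFinset (x i) \ S) ≤ k - (i + 1))
    (g : ↥{v : V | v ∉ S} → α) :
    ∃ c : Fin t → α, Function.Injective c ∧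
      (∀ i, c i ∈ L (x i)) ∧ ∀ i u (hu : u ∉ S), G.Adj (x i) u → c i ≠ g ⟨u, hu⟩ := by
  obtain ⟨c, hc_inj, hc⟩ := exists_injective_mem_sdiff_of_card_add_lt (fun i => L (x i))
    (fun i => ((G.neighborFinset (x i)).subtype (· ∈ {v : V | v ∉ S})).image g) fun i => by
      have := hnbr i
      have := card_image_le (s := (G.neighborFinset (x i)).subtype (· ∈ {v : V | v ∉ S})) (f := g)
      simp only [card_subtype, Set.mem_ofPred_eq, filter_notMem_eq_sdiff] at this ⊢
      rw [hL]
      omega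
  refine ⟨c, hc_inj, fun i => (mem_sdiff.1 (hc i)).1, fun i u hu hadj h => ?_⟩
  refine (mem_sdiff.1 (hc i)).2 (mem_image.2 ⟨⟨u, hu⟩, ?_, h.symm⟩)
  simpa using hadj

end Extension

theorem equitable_extension_lemma_general {V α : Type} [Fintype V] (G : SimpleGraph V)
    (k q r t : ℕ) (hr1 : 1 ≤ r) (hcard : Fintype.card V = k * q + r)
    (L : V → Finset α) (hL : ∀ v, (L v).card = k)
    (hrt : r ≤ t) (htk : t ≤ k)
    (x : Fin t → V) (hinj : Function.Injective x)
    (S : Finset V) (hS : S = Finset.univ.image x)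
    (hnbr : ∀ i : Fin t, ((G.neighborFinset (x i)) \ S).card ≤ k - ((i : ℕ) + 1))
    (hGS : ∃ g : ↥{v : V | v ∉ S} → α,
      IsEquitableLColoring (G.induce {v : V | v ∉ S}) k (fun v => L v.1) g) :
    ∃ f : V → α, IsEquitableLColoring G k L f := by
  subst hS
  obtain ⟨g, hg⟩ := hGS
  obtain ⟨c, hc_inj, hcL, hc_adj⟩ := exists_injective_coloring_of_neighbor_bound htk hL hnbr g
  obtain ⟨f, hfx, hfg⟩ := exists_extend_of_injective hinj c g
  refine ⟨f, hg.extend_of_injOn ?_ hfg ?_ ?_ ?_⟩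
  · rw [card_setOf_notMem, card_image_of_injective _ hinj, card_univ, Fintype.card_fin, hcard]
    exact (ceil_div_mul_add_sub_le hrt).trans_lt (lt_ceil_div_mul_add (by omega) hr1)
  · simp only [mem_image, mem_univ, true_and, forall_exists_index, forall_apply_eq_imp_iff, hfx]
    exact hcL
  · rintro _ hv _ hw h
    obtain ⟨i, -, rfl⟩ := mem_image.1 hv
    obtain ⟨j, -, rfl⟩ := mem_image.1 hw
    rw [hfx, hfx] at h
    rw [hc_inj h]
  · rintro _ hv u hu huv
    obtain ⟨i, -, rfl⟩ := mem_image.1 hv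
    rw [hfx, hfg u hu]
    exact hc_adj i u hu huv

theorem equitable_extension_lemma {V α : Type} [Fintype V] (G : SimpleGraph V)
    (k q r t : ℕ) (hr1 : 1 ≤ r) (hrk : r ≤ k) (hcard : Fintype.card V = k * q + r)
    (L : V → Finset α) (hL : ∀ v, (L v).card = k)
    (hrt : r ≤ t) (htk : t ≤ k)
    (x : Fin t → V) (hinj : Function.Injective x)
    (S : Finset V) (hS : S = Finset.univ.image x)
    (hnbr : ∀ i : Fin t, ((G.neighborFinset (x i)) \ S).card ≤ k - ((i : ℕ) + 1))
    (hGS : ∃ g : ↥{v : V | v ∉ S} → α,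
      IsEquitableLColoring (G.induce {v : V | v ∉ S}) k (fun v => L v.1) g) :
    ∃ f : V → α, IsEquitableLColoring G k L f :=
  equitable_extension_lemma_general G k q r t hr1 hcard L hL hrt htk x hinj S hS hnbr hGS
end

section
/- The square of the graph B(1,3,3) (the spider with legs of lengths 1, 3, 3) is equitably 4-choosable. -/
open SimpleGraph

attribute [local instance] Classical.propDecidable

/-- The spider `B(l₁, …, l_m)`: the subdivision of the star `K_{1,m}` whose `i`-th edge is
replaced by a path of length `l i`.  The vertex `Sum.inl ()` is the center, and
`Sum.inr ⟨i, j⟩` is the `(j+1)`-st vertex along the `i`-th leg. -/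
def spider (m : ℕ) (l : Fin m → ℕ) : SimpleGraph (Unit ⊕ Σ i : Fin m, Fin (l i)) :=
  SimpleGraph.fromRel (fun x y => match x, y with
    | Sum.inl _, Sum.inr ⟨_, j⟩ => (j : ℕ) = 0
    | Sum.inr ⟨i, j⟩, Sum.inr ⟨i', j'⟩ => (i : ℕ) = (i' : ℕ) ∧ (j : ℕ) + 1 = (j' : ℕ)
    | _, _ => False)

/-- The `p`-th power of `G`: same vertices, edges between distinct vertices at distance
at most `p` in `G`. -/
def graphPow {V : Type} (G : SimpleGraph V) (p : ℕ) : SimpleGraph V :=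
  SimpleGraph.fromRel (fun u v => G.Reachable u v ∧ G.dist u v ≤ p)

/-!
Order the vertices of `B(1,3,3)` as `C, A, B₁, D₁, B₂, D₂, B₃, D₃` (center, the leaf of the short
leg, then the two long legs `B`, `D` alternately by distance from the center). Colour greedily in
this order; each vertex only has to avoid the colours of at most three earlier vertices, so a
list of four colours always leaves a choice. The avoided vertices are the earlier neighbours in
the square, plus the pairs `A B₂`, `A D₂`, `B₃ D₃`: with these extra pairs no three vertices are
pairwise unconstrained, so every colour is used at most twice, which is `⌈8/4⌉`.
-/

theorem exists_greedy_choice {V α β : Type*} [Fintype V] [LinearOrder β] (r : V → β)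
    (L : V → Finset α) (P : V → Finset V) (hP : ∀ v, ∀ u ∈ P v, r u < r v)
    (hcard : ∀ v, (P v).card < (L v).card) :
    ∃ f : V → α, (∀ v, f v ∈ L v) ∧ ∀ v, ∀ u ∈ P v, f u ≠ f v := by
  suffices ∀ s : Finset V, ∃ f : V → α, (∀ v, f v ∈ L v) ∧
      ∀ v ∈ s, ∀ u ∈ P v, u ∈ s → f u ≠ f v by
    obtain ⟨f, hfL, hf⟩ := this Finset.univ
    exact ⟨f, hfL, fun v u hu => hf v (Finset.mem_univ v) u hu (Finset.mem_univ u)⟩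
  intro s
  induction s using Finset.induction_on_max_value r with
  | empty =>
    have hne v : (L v).Nonempty := Finset.card_pos.1 (pos_of_gt (hcard v))
    exact ⟨fun v => (hne v).choose, fun v => (hne v).choose_spec, by simp⟩
  | insert a s _ hmax ih =>
    obtain ⟨f, hfL, hf⟩ := ih
    obtain ⟨c, hcL, hcf⟩ : ∃ c ∈ L a, c ∉ (P a).image f := by
      by_contra! h
      exact (hcard a).not_ge ((Finset.card_le_card h).trans Finset.card_image_le)
    refine ⟨Function.update f a c, fun v => ?_, fun v hv u hu hus => ?_⟩
    · rcases eq_or_ne v a with rfl | hva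
      · simpa using hcL
      · simpa [hva] using hfL v
    rcases eq_or_ne v a with rfl | hva
    · have hua : u ≠ v := ne_of_apply_ne r (hP v u hu).ne
      simpa [hua] using fun h : f u = c => hcf (h ▸ Finset.mem_image_of_mem f hu)
    · have hvs : v ∈ s := (Finset.mem_insert.1 hv).resolve_left hva
      have hua : u ≠ a := by
        rintro rfl
        exact (hP v u hu).not_ge (hmax v hvs)
      simpa [hua, hva] using hf v hvs u hu ((Finset.mem_insert.1 hus).resolve_left hua)

theorem card_filter_eq_le_of_forall_ne {V α : Type*} [Fintype V] {P : V → Finset V}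
    {f : V → α} (hf : ∀ v, ∀ u ∈ P v, f u ≠ f v) {m : ℕ}
    (hm : ∀ S : Finset V, (∀ u ∈ S, ∀ v ∈ S, u ∉ P v) → S.card ≤ m) (c : α) :
    (Finset.univ.filter fun v => f v = c).card ≤ m :=
  hm _ fun u hu v hv huv => hf v u huv <| by
    rw [(Finset.mem_filter.1 hu).2, (Finset.mem_filter.1 hv).2]

theorem adj_or_exists_adj_adj_of_graphPow_two_adj {V : Type} {G : SimpleGraph V} {u v : V}
    (h : (graphPow G 2).Adj u v) : G.Adj u v ∨ ∃ w, G.Adj u w ∧ G.Adj w v := by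
  obtain ⟨hne, hr⟩ := (fromRel_adj _ _ _).1 h
  have hle : G.edist u v ≤ 2 := by
    rcases hr with ⟨hr, hd⟩ | ⟨hr, hd⟩
    · rw [← hr.coe_dist_eq_edist]
      exact_mod_cast hd
    · rw [edist_comm, ← hr.coe_dist_eq_edist]
      exact_mod_cast hd
  by_cases hadj : G.Adj u v
  · exact Or.inl hadj
  · have hcommon : (G.commonNeighbors u v).Nonempty := by
      by_contra hempty
      exact hle.not_gt (two_lt_edist_iff.2 ⟨hne, hadj, Set.not_nonempty_iff_eq_empty.1 hempty⟩)
    obtain ⟨w, huw, hvw⟩ := hcommon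
    exact Or.inr ⟨w, huw, hvw.symm⟩

instance (m : ℕ) (l : Fin m → ℕ) : DecidableRel (spider m l).Adj := fun x y => by
  rcases x with _ | ⟨i, j⟩ <;> rcases y with _ | ⟨i', j'⟩ <;>
    simp only [spider, fromRel_adj] <;> infer_instance

namespace Spider133

abbrev Vertex : Type := Unit ⊕ Σ i : Fin 3, Fin ((![1, 3, 3] : Fin 3 → ℕ) i)

/-- `C, A, B₁, D₁, B₂, D₂, B₃, D₃` get ranks `0, …, 7`. -/
def rank : Vertex → ℕ
  | Sum.inl _ => 0
  | Sum.inr ⟨i, j⟩ => 2 * j + i + 1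

def avoidedRanks : ℕ → Finset ℕ
  | 1 => {0}
  | 2 => {0, 1}
  | 3 => {0, 1, 2}
  | 4 => {0, 1, 2}
  | 5 => {0, 1, 3}
  | 6 => {2, 4}
  | 7 => {3, 5, 6}
  | _ => ∅

def avoided (v : Vertex) : Finset Vertex :=
  Finset.univ.filter fun u => rank u ∈ avoidedRanks (rank v)

theorem rank_lt_of_mem_avoided : ∀ v, ∀ u ∈ avoided v, rank u < rank v := by
  decide

theorem card_avoided_le_three : ∀ v, (avoided v).card ≤ 3 := by
  decide

theorem mem_avoided_of_adj : ∀ u v : Vertex,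
    (spider 3 ![1, 3, 3]).Adj u v → u ∈ avoided v ∨ v ∈ avoided u := by
  decide

theorem mem_avoided_of_adj_adj : ∀ u w v : Vertex,
    (spider 3 ![1, 3, 3]).Adj u w → (spider 3 ![1, 3, 3]).Adj w v →
      u = v ∨ u ∈ avoided v ∨ v ∈ avoided u := by
  decide

set_option maxRecDepth 100000 in
theorem card_le_two_of_forall_notMem_avoided :
    ∀ S : Finset Vertex, (∀ u ∈ S, ∀ v ∈ S, u ∉ avoided v) → S.card ≤ 2 := by
  decide

theorem mem_avoided_of_sq_adj {u v : Vertex} (h : (graphPow (spider 3 ![1, 3, 3]) 2).Adj u v) :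
    u ∈ avoided v ∨ v ∈ avoided u := by
  rcases adj_or_exists_adj_adj_of_graphPow_two_adj h with h | ⟨w, huw, hwv⟩
  · exact mem_avoided_of_adj u v h
  · exact (mem_avoided_of_adj_adj u w v huw hwv).resolve_left h.ne

end Spider133

open Spider133 in
theorem spider_1_3_3_square_equitably_4_choosable :
    EquitablyChoosable (graphPow (spider 3 ![1, 3, 3]) 2) 4 := by
  intro α L hL
  obtain ⟨f, hfL, hf⟩ := exists_greedy_choice rank L avoided rank_lt_of_mem_avoided
    fun v => by rw [hL]; exact (card_avoided_le_three v).trans_lt (by norm_num)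
  refine ⟨f, hfL, fun u v huv => ?_, fun c => ?_⟩
  · rcases mem_avoided_of_sq_adj huv with h | h
    exacts [hf v u h, (hf u v h).symm]
  · exact (card_filter_eq_le_of_forall_ne hf card_le_two_of_forall_notMem_avoided c).trans
      (by decide)
end

section
/- For all p, n ∈ ℕ, the p-th power of the path P_n is equitably k-choosable for every k ≥ p + 1. -/
open SimpleGraph

attribute [local instance] Classical.propDecidable

/-!
Split `0, …, n - 1` into consecutive blocks of `k` vertices and colour greedily from left to
right, each vertex avoiding the colours of the previous `p` vertices and of the earlier vertices
of its block. These are the `max p (i % k) < k` vertices just before `i`, so a list of `k`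
colours always has one left. The colouring is proper on `P_n^p`, and each colour occurs at most
once per block, hence at most `⌈n / k⌉` times.
-/

open Finset

theorem Nat.le_add_mod_of_div_eq {i j k : ℕ} (h : j / k = i / k) : i ≤ j + i % k :=
  calc i = i / k * k + i % k := (Nat.div_add_mod' i k).symm
    _ = j / k * k + i % k := by rw [h]
    _ ≤ j + i % k := by gcongr; exact Nat.div_mul_le_self j k

theorem Fin.card_le_of_injOn_div {n k : ℕ} (hk : 0 < k) {s : Finset (Fin n)}
    (hs : Set.InjOn (fun v : Fin n => (v : ℕ) / k) s) : #s ≤ (n + k - 1) / k := by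
  have hmaps : Set.MapsTo (fun v : Fin n => (v : ℕ) / k) s (range ((n + k - 1) / k)) := by
    intro v _
    dsimp only
    rw [coe_range, Set.mem_Iio, Nat.lt_iff_add_one_le, Nat.le_div_iff_mul_le hk, add_one_mul]
    have := Nat.div_mul_le_self v k
    omega
  simpa using card_le_card_of_injOn _ hmaps hs

namespace SimpleGraph

section GreedyListColoring

variable {ι α : Type*} [LinearOrder ι] [LocallyFiniteOrderBot ι] [WellFoundedLT ι]
  (G : SimpleGraph ι) [DecidableRel G.Adj] (L : ι → Finset α)

/-- Each vertex takes a colour from its list avoiding the colours of its earlier neighbours. -/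
noncomputable def greedyListColoring (hL : ∀ i, #{j ∈ Iio i | G.Adj j i} < #(L i)) : ι → α :=
  wellFounded_lt.fix fun i color =>
    (exists_mem_notMem_of_card_lt_card (s := {j ∈ Iio i | G.Adj j i}.attach.image
      fun j => color j.1 (mem_Iio.mp (mem_filter.mp j.2).1))
      (card_image_le.trans_lt (card_attach.trans_lt (hL i)))).choose

theorem greedyListColoring_spec (hL : ∀ i, #{j ∈ Iio i | G.Adj j i} < #(L i)) (i : ι) :
    G.greedyListColoring L hL i ∈ L i ∧
      ∀ j < i, G.Adj j i → G.greedyListColoring L hL j ≠ G.greedyListColoring L hL i := by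
  rw [greedyListColoring, WellFounded.fix_eq]
  generalize_proofs _ _ hex
  obtain ⟨hmem, hnot⟩ := (hex i fun j _ => G.greedyListColoring L hL j).choose_spec
  refine ⟨hmem, fun j hj hadj heq => hnot (mem_image.mpr ⟨⟨j, ?_⟩, mem_attach _ _, heq⟩)⟩
  exact mem_filter.mpr ⟨mem_Iio.mpr hj, hadj⟩

theorem exists_listColoring_of_card_lt (hL : ∀ i, #{j ∈ Iio i | G.Adj j i} < #(L i)) :
    ∃ f : ι → α, (∀ i, f i ∈ L i) ∧ ∀ i j, G.Adj i j → f i ≠ f j := by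
  refine ⟨G.greedyListColoring L hL, fun i => (G.greedyListColoring_spec L hL i).1, ?_⟩
  intro i j hij
  rcases lt_or_gt_of_ne hij.ne with hlt | hgt
  · exact (G.greedyListColoring_spec L hL j).2 i hlt hij
  · exact ((G.greedyListColoring_spec L hL i).2 j hgt hij.symm).symm

end GreedyListColoring

theorem pathGraph_val_le_add_walk_length {n : ℕ} {u v : Fin n} (w : (pathGraph n).Walk u v) :
    (u : ℕ) ≤ v + w.length ∧ (v : ℕ) ≤ u + w.length := by
  induction w with
  | nil => simp
  | cons h w ih =>
    rw [pathGraph_adj] at h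
    rw [Walk.length_cons]
    omega

theorem graphPow_pathGraph_adj_le {n p : ℕ} {u v : Fin n}
    (h : (graphPow (pathGraph n) p).Adj u v) : (u : ℕ) ≤ v + p ∧ (v : ℕ) ≤ u + p := by
  have bound : ∀ {a b : Fin n}, (pathGraph n).Reachable a b → (pathGraph n).dist a b ≤ p →
      (a : ℕ) ≤ b + p ∧ (b : ℕ) ≤ a + p := by
    intro a b hab hd
    obtain ⟨w, hw⟩ := hab.exists_walk_length_eq_dist
    have := pathGraph_val_le_add_walk_length w
    omega
  rcases (fromRel_adj _ _ _).mp h with ⟨-, ⟨hr, hd⟩ | ⟨hr, hd⟩⟩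
  · exact bound hr hd
  · exact (bound hr hd).symm

def bandBlockGraph (n p k : ℕ) : SimpleGraph (Fin n) where
  Adj u v := u ≠ v ∧ (((u : ℕ) ≤ v + p ∧ (v : ℕ) ≤ u + p) ∨ (u : ℕ) / k = v / k)
  symm := ⟨fun _ _ h => ⟨h.1.symm, h.2.imp And.symm Eq.symm⟩⟩
  loopless := ⟨fun _ h => h.1 rfl⟩

theorem bandBlockGraph_adj {n p k : ℕ} {u v : Fin n} : (bandBlockGraph n p k).Adj u v ↔
    u ≠ v ∧ (((u : ℕ) ≤ v + p ∧ (v : ℕ) ≤ u + p) ∨ (u : ℕ) / k = v / k) :=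
  Iff.rfl

theorem graphPow_pathGraph_le_bandBlockGraph (n p k : ℕ) :
    graphPow (pathGraph n) p ≤ bandBlockGraph n p k := fun _ _ h =>
  bandBlockGraph_adj.mpr ⟨h.ne, Or.inl (graphPow_pathGraph_adj_le h)⟩

theorem card_earlier_bandBlockGraph_lt {n p k : ℕ} (hpk : p < k) (i : Fin n) :
    #{j ∈ Iio i | (bandBlockGraph n p k).Adj j i} < k := by
  have hmod := Nat.mod_lt i (show 0 < k by omega)
  calc #{j ∈ Iio i | (bandBlockGraph n p k).Adj j i}
      ≤ #(Ico ((i : ℕ) - max p ((i : ℕ) % k)) i) := by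
        refine card_le_card_of_injOn Fin.val (fun j hj => ?_) Fin.val_injective.injOn
        simp only [coe_filter, mem_Iio, Fin.lt_def, Set.mem_ofPred_eq, bandBlockGraph_adj] at hj
        obtain ⟨hji, -, hnear⟩ := hj
        replace hnear : (i : ℕ) ≤ j + p ∨ (i : ℕ) ≤ j + (i : ℕ) % k :=
          hnear.imp And.right Nat.le_add_mod_of_div_eq
        have := le_max_left p ((i : ℕ) % k)
        have := le_max_right p ((i : ℕ) % k)
        generalize max p ((i : ℕ) % k) = m at *
        simp only [coe_Ico, Set.mem_Ico]
        omega
    _ < k := by rw [Nat.card_Ico]; omega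

end SimpleGraph

theorem path_power_equitably_choosable_general (p n : ℕ) :
    ∀ k, p + 1 ≤ k → EquitablyChoosable (graphPow (SimpleGraph.pathGraph n) p) k := by
  intro k hk α L hL
  obtain ⟨f, hfL, hf⟩ := (bandBlockGraph n p k).exists_listColoring_of_card_lt L
    fun i => (hL i).symm ▸ card_earlier_bandBlockGraph_lt hk i
  refine ⟨f, hfL, fun u v huv => hf u v (graphPow_pathGraph_le_bandBlockGraph n p k huv), ?_⟩
  intro c
  rw [Fintype.card_fin]
  refine Fin.card_le_of_injOn_div (by omega) fun u hu v hv huv => ?_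
  by_contra hne
  simp only [coe_filter, mem_univ, true_and, Set.mem_ofPred_eq] at hu hv
  exact hf u v (bandBlockGraph_adj.mpr ⟨hne, Or.inr huv⟩) (hu.trans hv.symm)

theorem path_power_equitably_choosable (p n : ℕ) (hp : 1 ≤ p) (hn : 1 ≤ n) :
    ∀ k, p + 1 ≤ k → EquitablyChoosable (graphPow (SimpleGraph.pathGraph n) p) k :=
  path_power_equitably_choosable_general p n
end

section
/- For every m ≥ 1, the total graph of the path P_m is isomorphic to the square of the path P_{2m−1}. -/
open SimpleGraph

attribute [local instance] Classical.propDecidable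

/-- The total graph of `G`: vertices are the vertices and edges of `G`, with adjacency
given by adjacency or incidence in `G`. -/
def totalGraph {V : Type} (G : SimpleGraph V) : SimpleGraph (V ⊕ G.edgeSet) :=
  SimpleGraph.fromRel (fun x y => match x, y with
    | Sum.inl u, Sum.inl v => G.Adj u v
    | Sum.inl u, Sum.inr e => u ∈ (e : Sym2 V)
    | Sum.inr _, Sum.inl _ => False
    | Sum.inr e, Sum.inr f => ∃ u, u ∈ (e : Sym2 V) ∧ u ∈ (f : Sym2 V))

/-! List the vertices and edges of `P_m` in their interleaved order `v₀, e₀, v₁, e₁, …, v_{m-1}`.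
Two items are adjacent in the total graph exactly when their positions differ by `1` (a vertex and
an incident edge) or by `2` (two adjacent vertices, or two edges sharing a vertex). Since distance
in a path is the difference of positions, this is the square of `P_{2m-1}`. -/

theorem graphPow_adj {V : Type} (G : SimpleGraph V) (p : ℕ) (u v : V) :
    (graphPow G p).Adj u v ↔ u ≠ v ∧ G.Reachable u v ∧ G.dist u v ≤ p := by
  rw [graphPow, fromRel_adj, G.dist_comm (u := v), reachable_comm (u := v), or_self]

theorem natDist_le_length_of_walk_pathGraph {n : ℕ} {u v : Fin n} (w : (pathGraph n).Walk u v) :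
    Nat.dist u v ≤ w.length := by
  induction w with
  | nil => simp
  | @cons x y z hxy _ ih =>
    have := Nat.dist.triangle_inequality x y z
    rw [pathGraph_adj] at hxy
    simp only [Walk.length_cons, Nat.dist] at *
    omega

theorem dist_pathGraph_le_natDist {n : ℕ} (u v : Fin n) :
    (pathGraph n).dist u v ≤ Nat.dist u v := by
  wlog huv : u ≤ v generalizing u v
  · rw [dist_comm, Nat.dist_comm]
    exact this v u (le_of_not_ge huv)
  obtain ⟨k, hk⟩ := Nat.exists_eq_add_of_le (Fin.le_iff_val_le_val.mp huv)
  rw [show Nat.dist u v = k by rw [Nat.dist]; omega]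
  induction k generalizing v with
  | zero => simp [Fin.ext hk.symm]
  | succ k ih =>
    let w : Fin n := ⟨u + k, by omega⟩
    have hwv : (pathGraph n).Adj w v := by rw [pathGraph_adj]; grind
    calc (pathGraph n).dist u v ≤ (pathGraph n).dist u w + (pathGraph n).dist w v :=
          hwv.reachable.dist_triangle_right u
      _ ≤ k + 1 := by
          rw [dist_eq_one_iff_adj.mpr hwv]
          exact Nat.add_le_add_right (ih w (Fin.le_iff_val_le_val.mpr (by simp [w])) rfl) 1

theorem dist_pathGraph {n : ℕ} (u v : Fin n) : (pathGraph n).dist u v = Nat.dist u v := by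
  obtain ⟨w, hw⟩ := (pathGraph_preconnected n u v).exists_walk_length_eq_dist
  exact le_antisymm (dist_pathGraph_le_natDist u v) (hw ▸ natDist_le_length_of_walk_pathGraph w)

theorem graphPow_pathGraph_adj {n p : ℕ} (u v : Fin n) :
    (graphPow (pathGraph n) p).Adj u v ↔ u ≠ v ∧ Nat.dist u v ≤ p := by
  simp [graphPow_adj, pathGraph_preconnected n u v, dist_pathGraph]

theorem Sym2.mem_iff_eq_inf_or_eq_sup {α : Type*} [LinearOrder α] {a : α} {s : Sym2 α} :
    a ∈ s ↔ a = s.inf ∨ a = s.sup := by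
  induction s with | _ b c
  rcases le_total b c with h | h <;> simp [h, or_comm]

theorem val_sup_of_mem_edgeSet_pathGraph {n : ℕ} {e : Sym2 (Fin n)}
    (he : e ∈ (pathGraph n).edgeSet) : (e.sup : ℕ) = e.inf + 1 := by
  induction e with | _ u v
  rw [mem_edgeSet, pathGraph_adj] at he
  simp only [Sym2.inf_mk, Sym2.sup_mk, Fin.coe_min, Fin.coe_max]
  omega

theorem eq_of_inf_eq_of_mem_edgeSet_pathGraph {n : ℕ} {e f : Sym2 (Fin n)}
    (he : e ∈ (pathGraph n).edgeSet) (hf : f ∈ (pathGraph n).edgeSet) (h : e.inf = f.inf) :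
    e = f := by
  refine Sym2.inf_eq_inf_and_sup_eq_sup.mp ⟨h, Fin.ext ?_⟩
  rw [val_sup_of_mem_edgeSet_pathGraph he, val_sup_of_mem_edgeSet_pathGraph hf, h]

def totalGraphPathGraphIndex (m : ℕ) : Fin m ⊕ (pathGraph m).edgeSet → Fin (2 * m - 1)
  | .inl u => ⟨2 * u, by omega⟩
  | .inr e => ⟨2 * (e : Sym2 (Fin m)).inf + 1, by
      have := val_sup_of_mem_edgeSet_pathGraph e.2
      omega⟩

theorem totalGraphPathGraphIndex_bijective (m : ℕ) :
    Function.Bijective (totalGraphPathGraphIndex m) := by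
  constructor
  · rintro (u | e) (v | f) h <;>
      simp only [totalGraphPathGraphIndex, Fin.mk.injEq] at h
    · exact congrArg _ (Fin.ext (by omega))
    · omega
    · omega
    · exact congrArg _ <| Subtype.ext <|
        eq_of_inf_eq_of_mem_edgeSet_pathGraph e.2 f.2 (Fin.ext (by omega))
  · intro j
    obtain ⟨i, hi | hi⟩ := Nat.even_or_odd' j
    · exact ⟨.inl ⟨i, by omega⟩, Fin.ext hi.symm⟩
    · have he : s((⟨i, by omega⟩ : Fin m), ⟨i + 1, by omega⟩) ∈ (pathGraph m).edgeSet :=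
        by simp [pathGraph_adj]
      exact ⟨.inr ⟨_, he⟩, Fin.ext (by simp [totalGraphPathGraphIndex, hi])⟩

theorem exists_mem_and_mem_iff_of_mem_edgeSet_pathGraph {n : ℕ} {e f : Sym2 (Fin n)}
    (he : e ∈ (pathGraph n).edgeSet) (hf : f ∈ (pathGraph n).edgeSet) :
    (∃ u ∈ e, u ∈ f) ↔ Nat.dist e.inf f.inf ≤ 1 := by
  have := val_sup_of_mem_edgeSet_pathGraph he
  have := val_sup_of_mem_edgeSet_pathGraph hf
  simp only [Sym2.mem_iff_eq_inf_or_eq_sup, Fin.ext_iff, Nat.dist]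
  constructor
  · rintro ⟨u, hue, huf⟩
    omega
  · intro h
    refine ⟨max e.inf f.inf, ?_, ?_⟩ <;> rw [Fin.coe_max] <;> omega

theorem totalGraph_pathGraph_adj {m : ℕ} (x y : Fin m ⊕ (pathGraph m).edgeSet) :
    (totalGraph (pathGraph m)).Adj x y ↔
      totalGraphPathGraphIndex m x ≠ totalGraphPathGraphIndex m y ∧
        Nat.dist (totalGraphPathGraphIndex m x) (totalGraphPathGraphIndex m y) ≤ 2 := by
  rw [totalGraph, fromRel_adj, (totalGraphPathGraphIndex_bijective m).1.ne_iff]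
  refine and_congr_right fun hxy => ?_
  rcases x with u | ⟨e, he⟩ <;> rcases y with v | ⟨f, hf⟩
  · simp only [totalGraphPathGraphIndex, ne_eq, Sum.inl.injEq, Fin.ext_iff, pathGraph_adj,
      Nat.dist] at hxy ⊢
    omega
  · have := val_sup_of_mem_edgeSet_pathGraph hf
    simp only [totalGraphPathGraphIndex, Sym2.mem_iff_eq_inf_or_eq_sup, Fin.ext_iff, Nat.dist,
      or_false]
    omega
  · have := val_sup_of_mem_edgeSet_pathGraph he
    simp only [totalGraphPathGraphIndex, Sym2.mem_iff_eq_inf_or_eq_sup, Fin.ext_iff, Nat.dist,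
      false_or]
    omega
  · have hinf : e.inf ≠ f.inf := fun h =>
      hxy (congrArg _ (Subtype.ext (eq_of_inf_eq_of_mem_edgeSet_pathGraph he hf h)))
    change (∃ u ∈ e, u ∈ f) ∨ (∃ u ∈ f, u ∈ e) ↔ _
    rw [exists_mem_and_mem_iff_of_mem_edgeSet_pathGraph he hf,
      exists_mem_and_mem_iff_of_mem_edgeSet_pathGraph hf he]
    simp only [totalGraphPathGraphIndex, ne_eq, Fin.ext_iff, Nat.dist] at hinf ⊢
    omega

theorem total_graph_path_iso_path_square_general (m : ℕ) :
    Nonempty (totalGraph (SimpleGraph.pathGraph m) ≃g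
      graphPow (SimpleGraph.pathGraph (2 * m - 1)) 2) :=
  ⟨⟨Equiv.ofBijective _ (totalGraphPathGraphIndex_bijective m), fun {x y} => by
    rw [totalGraph_pathGraph_adj, Equiv.ofBijective_apply, Equiv.ofBijective_apply,
      graphPow_pathGraph_adj]⟩⟩

theorem total_graph_path_iso_path_square (m : ℕ) (hm : 1 ≤ m) :
    Nonempty (totalGraph (SimpleGraph.pathGraph m) ≃g
      graphPow (SimpleGraph.pathGraph (2 * m - 1)) 2) :=
  total_graph_path_iso_path_square_general m
end
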